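/- Let m ≥ 2 and let X₁, …, Xₘ be i.i.d. random variables with the Gamma(α, λ) distribution (α, λ > 0). Then the m-th Gini index IG_m = E[max{X₁,…,Xₘ} − min{X₁,…,Xₘ}]/(m·E[X₁]) equals (1/(m α Γ(α)^m)) · ( ∫₀^∞ (Γ(α)^m − γ(α,s)^m) ds − ∫₀^∞ Γ(α,s)^m ds ), where γ(α,s) = ∫₀^s t^{α−1} e^{−t} dt is the lower incomplete gamma function and Γ(α,s) = ∫_s^∞ t^{α−1} e^{−t} dt is the upper incomplete gamma function. -/

import Mathlib

/-!
For a nonnegative integrable random variable `Y`, `E[Y] = ∫₀^∞ P(Y > t) dt`. By independence,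
`P(max Xᵢ ≤ t) = F(t)^m` and `P(min Xᵢ > t) = (1 - F(t))^m`, and for `Gamma(α, λ)` the distribution
function is `F(t) = γ(α, λt)/Γ(α)` while `1 - F(t) = Γ(α, λt)/Γ(α)`. Substituting `s = λt` in both
tail integrals and using `E[X₁] = α/λ` gives the formula.
-/

open MeasureTheory ProbabilityTheory Set

/-- The lower incomplete gamma function `γ(a, x) = ∫₀^x t^(a−1) e^(−t) dt`. -/
noncomputable def lowerIncompleteGamma (a x : ℝ) : ℝ :=
  ∫ t in Ioc (0 : ℝ) x, t ^ (a - 1) * Real.exp (-t)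

/-- The upper incomplete gamma function `Γ(a, x) = ∫_x^∞ t^(a−1) e^(−t) dt`. -/
noncomputable def upperIncompleteGamma (a x : ℝ) : ℝ :=
  ∫ t in Ioi x, t ^ (a - 1) * Real.exp (-t)

section IncompleteGamma

variable {a : ℝ}

lemma integrableOn_rpow_sub_one_mul_exp_neg_Ioi (ha : 0 < a) :
    IntegrableOn (fun t : ℝ => t ^ (a - 1) * Real.exp (-t)) (Ioi 0) :=
  (Real.GammaIntegral_convergent ha).congr_fun (fun _ _ => mul_comm _ _) measurableSet_Ioi

lemma upperIncompleteGamma_zero (ha : 0 < a) : upperIncompleteGamma a 0 = Real.Gamma a := by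
  rw [upperIncompleteGamma, Real.Gamma_eq_integral ha]
  exact setIntegral_congr_fun measurableSet_Ioi fun t _ => mul_comm _ _

lemma lowerIncompleteGamma_add_upperIncompleteGamma (ha : 0 < a) {x : ℝ} (hx : 0 ≤ x) :
    lowerIncompleteGamma a x + upperIncompleteGamma a x = Real.Gamma a := by
  have hint := integrableOn_rpow_sub_one_mul_exp_neg_Ioi ha
  rw [← upperIncompleteGamma_zero ha, lowerIncompleteGamma, upperIncompleteGamma,
    upperIncompleteGamma, ← setIntegral_union (Ioc_disjoint_Ioi le_rfl) measurableSet_Ioi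
      (hint.mono_set Ioc_subset_Ioi_self) (hint.mono_set (Ioi_subset_Ioi hx)),
    Ioc_union_Ioi_eq_Ioi hx]

lemma setIntegral_Ioi_rpow_sub_one_mul_exp_neg_mul (a : ℝ) {r s : ℝ} (hr : 0 < r) (hs : 0 ≤ s) :
    ∫ t in Ioi s, t ^ (a - 1) * Real.exp (-(r * t)) =
      (r ^ a)⁻¹ * upperIncompleteGamma a (r * s) := by
  have hscale : ∀ t ∈ Ioi s, t ^ (a - 1) * Real.exp (-(r * t))
      = (r ^ (a - 1))⁻¹ * ((r * t) ^ (a - 1) * Real.exp (-(r * t))) := fun t ht => by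
    rw [Real.mul_rpow hr.le (hs.trans (le_of_lt ht))]
    field_simp
  have hra : r ^ a = r ^ (a - 1) * r := by
    rw [← Real.rpow_add_one hr.ne']; ring_nf
  rw [setIntegral_congr_fun measurableSet_Ioi hscale, integral_const_mul,
    integral_comp_mul_left_Ioi (fun t => t ^ (a - 1) * Real.exp (-t)) s hr, smul_eq_mul,
    upperIncompleteGamma, hra, mul_inv, mul_assoc]

end IncompleteGamma

section GammaDistribution

lemma ae_nonneg_gammaMeasure (α l : ℝ) : ∀ᵐ x ∂gammaMeasure α l, 0 ≤ x := by
  rw [ae_iff]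
  simp only [not_le]
  change gammaMeasure α l (Iio 0) = 0
  rw [gammaMeasure, withDensity_apply _ measurableSet_Iio, lintegral_gammaPDF_of_nonpos le_rfl]

variable {α l : ℝ}

lemma gammaMeasure_real_eq_setIntegral (hα : 0 < α) (hl : 0 < l) {A : Set ℝ}
    (hA : MeasurableSet A) :
    (gammaMeasure α l).real A = ∫ x in A, gammaPDFReal α l x := by
  rw [measureReal_def, gammaMeasure, withDensity_apply _ hA]
  refine (integral_eq_lintegral_of_nonneg_ae ?_ ?_).symm
  · exact ae_of_all _ fun b ↦ by simp [gammaPDFReal_nonneg hα hl]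
  · fun_prop

lemma gammaPDFReal_of_nonneg {x : ℝ} (hx : 0 ≤ x) :
    gammaPDFReal α l x = l ^ α / Real.Gamma α * (x ^ (α - 1) * Real.exp (-(l * x))) := by
  rw [gammaPDFReal, if_pos hx, mul_assoc]

lemma gammaMeasure_real_Ioi (hα : 0 < α) (hl : 0 < l) {s : ℝ} (hs : 0 ≤ s) :
    (gammaMeasure α l).real (Ioi s) = upperIncompleteGamma α (l * s) / Real.Gamma α := by
  rw [gammaMeasure_real_eq_setIntegral hα hl measurableSet_Ioi,
    setIntegral_congr_fun measurableSet_Ioi fun x hx => gammaPDFReal_of_nonneg (hs.trans hx.le),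
    integral_const_mul, setIntegral_Ioi_rpow_sub_one_mul_exp_neg_mul α hl hs]
  have := (Real.rpow_pos_of_pos hl α).ne'
  field_simp

lemma gammaMeasure_real_Iic (hα : 0 < α) (hl : 0 < l) {s : ℝ} (hs : 0 ≤ s) :
    (gammaMeasure α l).real (Iic s) = lowerIncompleteGamma α (l * s) / Real.Gamma α := by
  have := isProbabilityMeasure_gammaMeasure hα hl
  have hsum := lowerIncompleteGamma_add_upperIncompleteGamma hα (by positivity : 0 ≤ l * s)
  have := (Real.Gamma_pos_of_pos hα).ne'
  rw [← compl_Ioi, measureReal_compl measurableSet_Ioi, probReal_univ,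
    gammaMeasure_real_Ioi hα hl hs]
  field_simp
  linarith

lemma integral_id_gammaMeasure (hα : 0 < α) (hl : 0 < l) :
    ∫ x, x ∂gammaMeasure α l = α / l := by
  have hdensity : ∀ x ∈ Ioi (0 : ℝ), (gammaPDF α l x).toReal • x
      = l ^ α / Real.Gamma α * (x ^ (α + 1 - 1) * Real.exp (-(l * x))) := fun x hx => by
    rw [gammaPDF, ENNReal.toReal_ofReal (gammaPDFReal_nonneg hα hl x), smul_eq_mul,
      gammaPDFReal_of_nonneg (le_of_lt hx), add_sub_cancel_right,
      Real.rpow_sub_one (ne_of_gt hx)]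
    have : x ≠ 0 := ne_of_gt hx
    field_simp
  rw [gammaMeasure, integral_withDensity_eq_integral_toReal_smul
      (show Measurable (gammaPDF α l) from (measurable_gammaPDFReal α l).ennreal_ofReal)
      (ae_of_all _ fun _ => ENNReal.ofReal_lt_top),
    ← setIntegral_eq_integral_of_forall_compl_eq_zero (s := Ioi 0) ?_,
    setIntegral_congr_fun measurableSet_Ioi hdensity, integral_const_mul,
    setIntegral_Ioi_rpow_sub_one_mul_exp_neg_mul (α + 1) hl le_rfl, mul_zero,
    upperIncompleteGamma_zero (by linarith), Real.Gamma_add_one hα.ne',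
    Real.rpow_add_one hl.ne']
  · have := (Real.Gamma_pos_of_pos hα).ne'
    have := (Real.rpow_pos_of_pos hl α).ne'
    field_simp
  · intro x hx
    rw [mem_Ioi, not_lt] at hx
    rcases hx.lt_or_eq with hneg | rfl
    · simp [gammaPDF_of_neg hneg]
    · simp

end GammaDistribution

section MaxMin

variable {ι : Type*} [Fintype ι] [Nonempty ι]

lemma lt_ciInf_iff_of_finite {α : Type*} [ConditionallyCompleteLinearOrder α] {f : ι → α}
    {a : α} : a < ⨅ i, f i ↔ ∀ i, a < f i := by
  refine ⟨fun h i => h.trans_le (ciInf_le (Set.finite_range f).bddBelow i), fun h => ?_⟩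
  obtain ⟨j, hj⟩ := exists_eq_ciInf_of_finite (f := f)
  exact hj ▸ h j

lemma abs_ciSup_le_sum_abs (f : ι → ℝ) : |⨆ i, f i| ≤ ∑ i, |f i| := by
  obtain ⟨j, hj⟩ := exists_eq_ciSup_of_finite (f := f)
  rw [← hj]
  exact Finset.single_le_sum (f := fun i => |f i|) (fun i _ => abs_nonneg _) (Finset.mem_univ j)

lemma abs_ciInf_le_sum_abs (f : ι → ℝ) : |⨅ i, f i| ≤ ∑ i, |f i| := by
  obtain ⟨j, hj⟩ := exists_eq_ciInf_of_finite (f := f)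
  rw [← hj]
  exact Finset.single_le_sum (f := fun i => |f i|) (fun i _ => abs_nonneg _) (Finset.mem_univ j)

variable {Ω : Type*} [MeasurableSpace Ω] {P : Measure Ω} {X : ι → Ω → ℝ}

lemma integrable_iSup_of_finite (hX : ∀ i, Integrable (X i) P) :
    Integrable (fun ω => ⨆ i, X i ω) P :=
  (integrable_finsetSum _ fun i _ => (hX i).abs).mono'
    (AEMeasurable.iSup fun i => (hX i).aemeasurable).aestronglyMeasurable
    (ae_of_all _ fun ω => abs_ciSup_le_sum_abs fun i => X i ω)

lemma integrable_iInf_of_finite (hX : ∀ i, Integrable (X i) P) :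
    Integrable (fun ω => ⨅ i, X i ω) P :=
  (integrable_finsetSum _ fun i _ => (hX i).abs).mono'
    (AEMeasurable.iInf fun i => (hX i).aemeasurable).aestronglyMeasurable
    (ae_of_all _ fun ω => abs_ciInf_le_sum_abs fun i => X i ω)

end MaxMin

namespace ProbabilityTheory.iIndepFun

variable {ι Ω : Type*} [Fintype ι] [MeasurableSpace Ω] {P : Measure Ω} {X : ι → Ω → ℝ}
  {μ : Measure ℝ}

lemma measureReal_iInter_preimage (h : iIndepFun X P) (hX : ∀ i, HasLaw (X i) μ P)
    {B : Set ℝ} (hB : MeasurableSet B) :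
    P.real (⋂ i, X i ⁻¹' B) = μ.real B ^ Fintype.card ι := by
  have hmarginal : ∀ i, P.real (X i ⁻¹' B) = μ.real B := fun i => (hX i).measureReal_eq hB
  rw [measureReal_def, h.meas_iInter fun i => ⟨B, hB, rfl⟩, ENNReal.toReal_prod]
  simp [← measureReal_def, hmarginal]

variable [Nonempty ι]

lemma measureReal_iSup_le (h : iIndepFun X P) (hX : ∀ i, HasLaw (X i) μ P) (s : ℝ) :
    P.real {ω | ⨆ i, X i ω ≤ s} = μ.real (Iic s) ^ Fintype.card ι := by
  have hset : {ω | ⨆ i, X i ω ≤ s} = ⋂ i, X i ⁻¹' Iic s := by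
    ext ω
    simpa using ciSup_le_iff (Set.finite_range fun i => X i ω).bddAbove
  rw [hset, h.measureReal_iInter_preimage hX measurableSet_Iic]

lemma measureReal_lt_iInf (h : iIndepFun X P) (hX : ∀ i, HasLaw (X i) μ P) (s : ℝ) :
    P.real {ω | s < ⨅ i, X i ω} = μ.real (Ioi s) ^ Fintype.card ι := by
  have hset : {ω | s < ⨅ i, X i ω} = ⋂ i, X i ⁻¹' Ioi s := by
    ext ω
    simpa using lt_ciInf_iff_of_finite
  rw [hset, h.measureReal_iInter_preimage hX measurableSet_Ioi]

lemma integral_iSup_sub_iInf [IsProbabilityMeasure P] (h : iIndepFun X P)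
    (hX : ∀ i, HasLaw (X i) μ P) (hμ : Integrable (fun x => x) μ) (hμ_nonneg : ∀ᵐ x ∂μ, 0 ≤ x) :
    ∫ ω, (⨆ i, X i ω) - ⨅ i, X i ω ∂P =
      (∫ t in Ioi 0, (1 - μ.real (Iic t) ^ Fintype.card ι)) -
        ∫ t in Ioi 0, μ.real (Ioi t) ^ Fintype.card ι := by
  have hint : ∀ i, Integrable (X i) P := fun i =>
    (integrable_map_measure aestronglyMeasurable_id (hX i).aemeasurable).mp ((hX i).map_eq ▸ hμ)
  have hnonneg : ∀ᵐ ω ∂P, ∀ i, 0 ≤ X i ω :=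
    ae_all_iff.mpr fun i =>
      ((hX i).ae_iff (measurableSet_setOfPred.mp measurableSet_Ici)).mpr hμ_nonneg
  have hmax_tail : ∀ t, P.real {ω | t < ⨆ i, X i ω} = 1 - μ.real (Iic t) ^ Fintype.card ι := by
    intro t
    rw [← h.measureReal_iSup_le hX t, ← probReal_compl_eq_one_sub₀ ?_]
    · simp only [compl_ofPred, not_le]
    · exact (AEMeasurable.iSup fun i => (hX i).aemeasurable).nullMeasurable measurableSet_Iic
  rw [integral_sub (integrable_iSup_of_finite hint) (integrable_iInf_of_finite hint),
    (integrable_iSup_of_finite hint).integral_eq_integral_meas_lt ?_,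
    (integrable_iInf_of_finite hint).integral_eq_integral_meas_lt ?_]
  · simp_rw [hmax_tail, h.measureReal_lt_iInf hX]
  · filter_upwards [hnonneg] with ω hω using le_ciInf hω
  · obtain ⟨i⟩ := ‹Nonempty ι›
    filter_upwards [hnonneg] with ω hω using
      (hω i).trans (le_ciSup (f := fun j => X j ω) (Set.finite_range _).bddAbove i)

end ProbabilityTheory.iIndepFun

section GammaTails

variable {α l : ℝ}

lemma integral_one_sub_gammaMeasure_real_Iic_pow (hα : 0 < α) (hl : 0 < l) (m : ℕ) :
    ∫ t in Ioi 0, (1 - (gammaMeasure α l).real (Iic t) ^ m) =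
      (l * Real.Gamma α ^ m)⁻¹ *
        ∫ s in Ioi 0, (Real.Gamma α ^ m - lowerIncompleteGamma α s ^ m) := by
  have hΓ := (Real.Gamma_pos_of_pos hα).ne'
  have htail : ∀ t ∈ Ioi (0 : ℝ), 1 - (gammaMeasure α l).real (Iic t) ^ m =
      (Real.Gamma α ^ m)⁻¹ * (Real.Gamma α ^ m - lowerIncompleteGamma α (l * t) ^ m) :=
    fun t ht => by
      rw [gammaMeasure_real_Iic hα hl (le_of_lt ht), div_pow]
      field_simp
  rw [setIntegral_congr_fun measurableSet_Ioi htail, integral_const_mul,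
    integral_comp_mul_left_Ioi (fun s => Real.Gamma α ^ m - lowerIncompleteGamma α s ^ m) 0 hl,
    mul_zero, smul_eq_mul, mul_inv]
  ring

lemma integral_gammaMeasure_real_Ioi_pow (hα : 0 < α) (hl : 0 < l) (m : ℕ) :
    ∫ t in Ioi 0, (gammaMeasure α l).real (Ioi t) ^ m =
      (l * Real.Gamma α ^ m)⁻¹ * ∫ s in Ioi 0, upperIncompleteGamma α s ^ m := by
  have htail : ∀ t ∈ Ioi (0 : ℝ), (gammaMeasure α l).real (Ioi t) ^ m =
      (Real.Gamma α ^ m)⁻¹ * upperIncompleteGamma α (l * t) ^ m := fun t ht => by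
    rw [gammaMeasure_real_Ioi hα hl (le_of_lt ht), div_pow, div_eq_inv_mul]
  rw [setIntegral_congr_fun measurableSet_Ioi htail, integral_const_mul,
    integral_comp_mul_left_Ioi (fun s => upperIncompleteGamma α s ^ m) 0 hl,
    mul_zero, smul_eq_mul, mul_inv]
  ring

end GammaTails

/-- For i.i.d. `X₁,…,Xₘ` (`m ≥ 2`) with the `Gamma(α, λ)` distribution,
the `m`-th Gini index `E[max − min]/(m E[X₁])` equals
`(1/(m α Γ(α)^m)) (∫₀^∞ (Γ(α)^m − γ(α,s)^m) ds − ∫₀^∞ Γ(α,s)^m ds)`. -/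
theorem mth_Gini_index_gamma
    {Ω : Type*} [MeasureSpace Ω] [IsProbabilityMeasure (ℙ : Measure Ω)]
    (m : ℕ) (hm : 2 ≤ m) (α l : ℝ) (hα : 0 < α) (hl : 0 < l) (X : Fin m → Ω → ℝ)
    (hindep : iIndepFun X ℙ)
    (hident : ∀ i, Measure.map (X i) ℙ = gammaMeasure α l) :
    (∫ ω, ((⨆ i, X i ω) - ⨅ i, X i ω) ∂ℙ) /
        (m * ∫ ω, X ⟨0, by omega⟩ ω ∂ℙ) =
      (1 / (m * α * Real.Gamma α ^ m)) *
        ((∫ s in Ioi (0 : ℝ), (Real.Gamma α ^ m - lowerIncompleteGamma α s ^ m)) -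
          ∫ s in Ioi (0 : ℝ), upperIncompleteGamma α s ^ m) := by
  have := isProbabilityMeasure_gammaMeasure hα hl
  have : Nonempty (Fin m) := ⟨⟨0, by omega⟩⟩
  have hlaw : ∀ i, HasLaw (X i) (gammaMeasure α l) ℙ := fun i =>
    ⟨.of_map_ne_zero (hident i ▸ IsProbabilityMeasure.ne_zero _), hident i⟩
  have hmean := integral_id_gammaMeasure hα hl
  -- the mean is nonzero, so the Bochner integral is not the junk value of a non-integrable function
  have hint : Integrable (fun x => x) (gammaMeasure α l) :=
    .of_integral_ne_zero (by rw [hmean]; positivity)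
  rw [hindep.integral_iSup_sub_iInf hlaw hint (ae_nonneg_gammaMeasure α l), Fintype.card_fin,
    integral_one_sub_gammaMeasure_real_Iic_pow hα hl, integral_gammaMeasure_real_Ioi_pow hα hl,
    (hlaw _).integral_eq, hmean]
  have := (Real.Gamma_pos_of_pos hα).ne'
  field_simp
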